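/- Let I be an interval of ℝ and A : I → M_{n×m}(ℝ) a continuous matrix function such that there exists c > 0 with m_{A(t)} ≥ c for all t ∈ I (i.e. ‖A(t)x‖ ≥ c‖x‖ for all x ∈ ℝᵐ). Then there exists a continuous matrix function L : I → M_{m×n}(ℝ) such that L(t)A(t) = I_m and ‖L(t)‖ ≤ 1/c for all t ∈ I. -/

import Mathlib

open scoped RealInnerProductSpace BigOperators

/-- The Euclidean operator norm of a real matrix: `sup {‖Ax‖ : ‖x‖ = 1}`. -/
noncomputable def opNorm {m n : ℕ} (A : Matrix (Fin m) (Fin n) ℝ) : ℝ :=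
  sSup {c : ℝ | ∃ x : EuclideanSpace ℝ (Fin n), ‖x‖ = 1 ∧ c = ‖Matrix.toEuclideanLin A x‖}

/-- The matrix of the orthogonal projection of `ℝⁿ` onto the subspace `U`. -/
noncomputable def projMatrix {n : ℕ} (U : Submodule ℝ (EuclideanSpace ℝ (Fin n))) :
    Matrix (Fin n) (Fin n) ℝ :=
  Matrix.toEuclideanLin.symm (U.subtype ∘ₗ (U.orthogonalProjectionOnto).toLinearMap)

/-- The minimal stretch of a matrix `A` on a subspace `U`: `inf {‖Ax‖ : x ∈ U, ‖x‖ = 1}`. -/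
noncomputable def minStretch {m n : ℕ} (A : Matrix (Fin m) (Fin n) ℝ)
    (U : Submodule ℝ (EuclideanSpace ℝ (Fin n))) : ℝ :=
  sInf {c : ℝ | ∃ x ∈ U, ‖x‖ = 1 ∧ c = ‖Matrix.toEuclideanLin A x‖}

/-!
The left inverse is the pseudoinverse `L = (Aᴴ A)⁻¹ Aᴴ`.
A lower bound `c‖x‖ ≤ ‖Ax‖` makes `A` injective, so the Gram matrix `Aᴴ A` is positive definite and
`L` depends continuously on `A` because matrix inversion is continuous at invertible matrices.
Moreover `A L` is self-adjoint and idempotent, i.e. an orthogonal projection, so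
`c‖Lx‖ ≤ ‖A L x‖ ≤ ‖x‖`.
-/

open scoped Matrix

namespace Matrix

variable {𝕜 : Type*} [RCLike 𝕜] {m n : Type*} [Fintype m] [Fintype n] [DecidableEq n]

lemma injective_mulVec_of_mul_norm_le {A : Matrix m n 𝕜} {c : ℝ} (hc : 0 < c)
    (hA : ∀ x : EuclideanSpace 𝕜 n, c * ‖x‖ ≤ ‖toEuclideanLin A x‖) :
    Function.Injective A.mulVec := by
  intro v w hvw
  have hbound : c * ‖WithLp.toLp 2 (v - w)‖ ≤ 0 := by
    simpa [toLpLin_apply, mulVec_sub, hvw] using hA (WithLp.toLp 2 (v - w))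
  simpa [sub_eq_zero] using norm_le_zero_iff.mp (nonpos_of_mul_nonpos_right hbound hc)

lemma norm_toEuclideanLin_le_of_isStarProjection {P : Matrix n n 𝕜} (hP : IsStarProjection P)
    (x : EuclideanSpace 𝕜 n) : ‖toEuclideanLin P x‖ ≤ ‖x‖ :=
  (toEuclideanCLM (n := n) (𝕜 := 𝕜) P).le_of_opNorm_le
    (hP.map (toEuclideanCLM (n := n) (𝕜 := 𝕜))).norm_le x |>.trans_eq (one_mul _)

/-- The Moore–Penrose pseudoinverse of a matrix with independent columns (for other matrices
`(Aᴴ * A)⁻¹` is the junk value `0`). -/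
noncomputable def leftPseudoinverse (A : Matrix m n 𝕜) : Matrix n m 𝕜 := (Aᴴ * A)⁻¹ * Aᴴ

open scoped ComplexOrder in
lemma isUnit_det_conjTranspose_mul_self {A : Matrix m n 𝕜} (hA : Function.Injective A.mulVec) :
    IsUnit (Aᴴ * A).det :=
  (isUnit_iff_isUnit_det _).mp (PosDef.conjTranspose_mul_self A hA).isUnit

lemma leftPseudoinverse_mul {A : Matrix m n 𝕜} (hA : Function.Injective A.mulVec) :
    leftPseudoinverse A * A = 1 := by
  rw [leftPseudoinverse, Matrix.mul_assoc, nonsing_inv_mul _ (isUnit_det_conjTranspose_mul_self hA)]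

lemma isStarProjection_mul_leftPseudoinverse [DecidableEq m] {A : Matrix m n 𝕜}
    (hA : Function.Injective A.mulVec) : IsStarProjection (A * leftPseudoinverse A) where
  isIdempotentElem := by
    rw [IsIdempotentElem, Matrix.mul_assoc, ← Matrix.mul_assoc _ A, leftPseudoinverse_mul hA,
      Matrix.one_mul]
  isSelfAdjoint := by
    rw [IsSelfAdjoint, star_eq_conjTranspose, leftPseudoinverse, conjTranspose_mul,
      conjTranspose_mul, conjTranspose_nonsing_inv, conjTranspose_mul, conjTranspose_conjTranspose,
      Matrix.mul_assoc]

lemma norm_leftPseudoinverse_apply_le [DecidableEq m] {A : Matrix m n 𝕜} {c : ℝ} (hc : 0 < c)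
    (hA : ∀ x : EuclideanSpace 𝕜 n, c * ‖x‖ ≤ ‖toEuclideanLin A x‖) (y : EuclideanSpace 𝕜 m) :
    ‖toEuclideanLin (leftPseudoinverse A) y‖ ≤ c⁻¹ * ‖y‖ := by
  rw [inv_mul_eq_div, le_div_iff₀' hc]
  calc c * ‖toEuclideanLin (leftPseudoinverse A) y‖
      ≤ ‖toEuclideanLin A (toEuclideanLin (leftPseudoinverse A) y)‖ := hA _
    _ = ‖toEuclideanLin (A * leftPseudoinverse A) y‖ := by simp
    _ ≤ ‖y‖ := norm_toEuclideanLin_le_of_isStarProjection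
        (isStarProjection_mul_leftPseudoinverse (injective_mulVec_of_mul_norm_le hc hA)) y

lemma continuousAt_leftPseudoinverse {A : Matrix m n 𝕜} (hA : Function.Injective A.mulVec) :
    ContinuousAt leftPseudoinverse A := by
  have hgram : Continuous fun M : Matrix m n 𝕜 ↦ Mᴴ * M :=
    continuous_id.matrix_conjTranspose.matrix_mul continuous_id
  have hinv : ContinuousAt (fun M : Matrix m n 𝕜 ↦ (Mᴴ * M)⁻¹) A :=
    ContinuousAt.comp (f := fun M : Matrix m n 𝕜 ↦ Mᴴ * M) (continuousAt_matrix_inv _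
      (NormedRing.inverse_continuousAt (isUnit_det_conjTranspose_mul_self hA).unit))
      hgram.continuousAt
  have hmul : Continuous fun p : Matrix n n 𝕜 × Matrix n m 𝕜 ↦ p.1 * p.2 :=
    continuous_fst.matrix_mul continuous_snd
  exact ContinuousAt.comp (f := fun M : Matrix m n 𝕜 ↦ ((Mᴴ * M)⁻¹, Mᴴ)) hmul.continuousAt
    (hinv.prodMk continuous_id.matrix_conjTranspose.continuousAt)

lemma _root_.ContinuousOn.matrix_leftPseudoinverse {X : Type*} [TopologicalSpace X]
    {A : X → Matrix m n 𝕜} {s : Set X} (hA : ContinuousOn A s)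
    (hinj : ∀ t ∈ s, Function.Injective (A t).mulVec) :
    ContinuousOn (fun t ↦ leftPseudoinverse (A t)) s := fun t ht ↦
  (continuousAt_leftPseudoinverse (hinj t ht)).comp_continuousWithinAt (hA t ht)

end Matrix

lemma opNorm_le_of_norm_le {m n : ℕ} {L : Matrix (Fin m) (Fin n) ℝ} {K : ℝ} (hK : 0 ≤ K)
    (hL : ∀ x, ‖Matrix.toEuclideanLin L x‖ ≤ K * ‖x‖) : opNorm L ≤ K := by
  refine Real.sSup_le ?_ hK
  rintro _ ⟨x, hx, rfl⟩
  simpa [hx] using hL x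

theorem continuous_left_inverse_general {n m : ℕ} (I : Set ℝ)
    (A : ℝ → Matrix (Fin n) (Fin m) ℝ) (hA : ContinuousOn A I)
    (c : ℝ) (hc : 0 < c)
    (hstretch : ∀ t ∈ I, ∀ x : EuclideanSpace ℝ (Fin m),
      c * ‖x‖ ≤ ‖Matrix.toEuclideanLin (A t) x‖) :
    ∃ L : ℝ → Matrix (Fin m) (Fin n) ℝ,
      ContinuousOn L I ∧
      ∀ t ∈ I, L t * A t = (1 : Matrix (Fin m) (Fin m) ℝ) ∧ opNorm (L t) ≤ 1 / c := by
  have hinj t (ht : t ∈ I) : Function.Injective (A t).mulVec :=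
    Matrix.injective_mulVec_of_mul_norm_le hc (hstretch t ht)
  refine ⟨fun t ↦ (A t).leftPseudoinverse, hA.matrix_leftPseudoinverse hinj, fun t ht ↦
    ⟨Matrix.leftPseudoinverse_mul (hinj t ht), ?_⟩⟩
  rw [one_div]
  exact opNorm_le_of_norm_le (by positivity)
    (Matrix.norm_leftPseudoinverse_apply_le hc (hstretch t ht))

/-- If `A : I → M_{n×m}(ℝ)` is continuous on an interval `I` and satisfies
`‖A(t)x‖ ≥ c‖x‖` for all `x` (minimal stretch at least `c > 0`), then there is a
continuous left inverse `L : I → M_{m×n}(ℝ)` with `L(t)A(t) = I_m` and `‖L(t)‖ ≤ 1/c`. -/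
theorem continuous_left_inverse {n m : ℕ} (I : Set ℝ) (hI : I.OrdConnected)
    (A : ℝ → Matrix (Fin n) (Fin m) ℝ) (hA : ContinuousOn A I)
    (c : ℝ) (hc : 0 < c)
    (hstretch : ∀ t ∈ I, ∀ x : EuclideanSpace ℝ (Fin m),
      c * ‖x‖ ≤ ‖Matrix.toEuclideanLin (A t) x‖) :
    ∃ L : ℝ → Matrix (Fin m) (Fin n) ℝ,
      ContinuousOn L I ∧
      ∀ t ∈ I, L t * A t = (1 : Matrix (Fin m) (Fin m) ℝ) ∧ opNorm (L t) ≤ 1 / c :=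
  continuous_left_inverse_general I A hA c hc hstretch
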